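/- Let n, k, b be integers with 1 ≤ k-1 ≤ b ≤ n. Then the number of vertices of G_{n,k,b} satisfies |V_{n,k,b}| = (n-b+1)·C(b,k-1) + C(b,k) = (n+1)·C(b,k-1) - (k-1)·C(b+1,k), where C(m,j) denotes the binomial coefficient. -/

import Mathlib

/-- The maximum element of a finite set of naturals (`0` for the empty set). -/
def fmax (X : Finset ℕ) : ℕ := WithBot.unbotD 0 X.max

/-- The minimum element of a finite set of naturals (`0` for the empty set). -/
def fmin (X : Finset ℕ) : ℕ := WithTop.untopD 0 X.min

/-- The vertex set `V_{n,k,b}`: all `k`-element subsets `X` of `{0,…,n}`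
with `max X - min X ≤ b`. -/
def Vnkb (n k b : ℕ) : Finset (Finset ℕ) :=
  ((Finset.range (n + 1)).powersetCard k).filter (fun X => fmax X - fmin X ≤ b)

/-- The graph `G_{n,k,b}`: two distinct vertices `X, Y` are adjacent iff
`max (X ∪ Y) - min (X ∪ Y) ≤ b`. -/
def Gnkb (n k b : ℕ) : SimpleGraph (Vnkb n k b) where
  Adj X Y := X ≠ Y ∧ fmax (X.1 ∪ Y.1) - fmin (X.1 ∪ Y.1) ≤ b
  symm := by
    refine ⟨?_⟩
    rintro X Y ⟨h1, h2⟩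
    exact ⟨h1.symm, by rwa [Finset.union_comm]⟩
  loopless := by refine ⟨?_⟩; rintro X ⟨h1, -⟩; exact h1 rfl

/-- The bandwidth of a finite graph: the minimum over all bijective labellings of the
vertices by `{0, …, |V|-1}` (equivalently `{1, …, |V|}`) of the maximal absolute
label difference along an edge. -/
noncomputable def bandwidth {V : Type*} [Fintype V] (G : SimpleGraph V) : ℕ :=
  sInf {m : ℕ | ∃ f : V ≃ Fin (Fintype.card V),
    ∀ u v : V, G.Adj u v → (((f u : ℕ) : ℤ) - ((f v : ℕ) : ℤ)).natAbs ≤ m}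

/-!
Sort the sets `X ∈ V_{n,k,b}` by their minimum `m`. If `m ≤ n - b`, then `X = {m} ∪ S` for an
arbitrary `(k-1)`-subset `S` of `(m, m + b]`, giving `C(b, k-1)` sets for each of the `n - b + 1`
values of `m`. If `m > n - b`, then `X` is an arbitrary `k`-subset of `(n - b, n]`, whose diameter
is automatically below `b`; there are `C(b, k)` of these. The second closed form follows from
Pascal's rule and absorption, which give `(k-1)·C(b+1,k) = b·C(b,k-1) - C(b,k)`.
-/

open Finset

section fminfmax

variable {X : Finset ℕ}

lemma fmin_eq_min' (hX : X.Nonempty) : fmin X = X.min' hX := by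
  rw [fmin, ← coe_min' hX, WithTop.untopD_coe]

lemma fmax_eq_max' (hX : X.Nonempty) : fmax X = X.max' hX := by
  rw [fmax, ← coe_max' hX, WithBot.unbotD_coe]

lemma fmin_mem (hX : X.Nonempty) : fmin X ∈ X := by
  rw [fmin_eq_min' hX]; exact X.min'_mem hX

lemma fmax_mem (hX : X.Nonempty) : fmax X ∈ X := by
  rw [fmax_eq_max' hX]; exact X.max'_mem hX

lemma fmin_le {x : ℕ} (hx : x ∈ X) : fmin X ≤ x := by
  rw [fmin_eq_min' ⟨x, hx⟩]; exact X.min'_le x hx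

lemma subset_Icc_iff_le_fmin_and_fmax_le (hX : X.Nonempty) {a c : ℕ} :
    X ⊆ Icc a c ↔ a ≤ fmin X ∧ fmax X ≤ c := by
  rw [fmin_eq_min' hX, fmax_eq_max' hX, le_min'_iff, max'_le_iff]
  simp only [subset_iff, mem_Icc, ← forall₂_and]

end fminfmax

lemma card_filter_mem_powersetCard_succ_insert {α : Type*} [DecidableEq α] {a : α}
    {s : Finset α} (ha : a ∉ s) (j : ℕ) :
    #{X ∈ powersetCard (j + 1) (insert a s) | a ∈ X} = (#s).choose j := by
  have notMem {X : Finset α} {i : ℕ} (hX : X ∈ powersetCard i s) : a ∉ X :=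
    fun haX => ha ((mem_powersetCard.1 hX).1 haX)
  rw [powersetCard_succ_insert ha, filter_union, filter_false_of_mem fun X hX => notMem hX,
    filter_true_of_mem fun X hX => ?_, empty_union, card_image_of_injOn, card_powersetCard]
  · intro X hX Y hY hXY
    rw [← erase_insert (notMem hX), hXY, erase_insert (notMem hY)]
  · obtain ⟨Y, -, rfl⟩ := mem_image.1 hX
    exact mem_insert_self a Y

section Vnkb

variable {n k b : ℕ}

lemma mem_Vnkb {X : Finset ℕ} :
    X ∈ Vnkb n k b ↔ X ⊆ range (n + 1) ∧ #X = k ∧ fmax X - fmin X ≤ b := by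
  simp only [Vnkb, mem_filter, mem_powersetCard, and_assoc]

lemma filter_Vnkb_fmin_eq (hk : 1 ≤ k) {m : ℕ} (hm : m + b ≤ n) :
    {X ∈ Vnkb n k b | fmin X = m} = {X ∈ powersetCard k (Icc m (m + b)) | m ∈ X} := by
  ext X
  simp only [mem_filter, mem_Vnkb, mem_powersetCard]
  constructor
  · rintro ⟨⟨-, hcard, hdiam⟩, rfl⟩
    have hX : X.Nonempty := card_pos.1 (hcard ▸ hk)
    refine ⟨⟨(subset_Icc_iff_le_fmin_and_fmax_le hX).2 ⟨le_rfl, by omega⟩, hcard⟩, fmin_mem hX⟩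
  · rintro ⟨⟨hsub, hcard⟩, hmX⟩
    obtain ⟨hle, hfmax⟩ := (subset_Icc_iff_le_fmin_and_fmax_le ⟨m, hmX⟩).1 hsub
    have hfmin : fmin X = m := le_antisymm (fmin_le hmX) hle
    refine ⟨⟨hsub.trans fun x hx => ?_, hcard, by omega⟩, hfmin⟩
    rw [mem_Icc] at hx
    rw [mem_range]
    omega

lemma card_filter_Vnkb_fmin_eq (hk : 1 ≤ k) {m : ℕ} (hm : m + b ≤ n) :
    #{X ∈ Vnkb n k b | fmin X = m} = b.choose (k - 1) := by
  obtain ⟨j, rfl⟩ : ∃ j, k = j + 1 := ⟨k - 1, by omega⟩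
  rw [filter_Vnkb_fmin_eq hk hm, ← Ioc_insert_left (by omega),
    card_filter_mem_powersetCard_succ_insert left_notMem_Ioc, Nat.card_Ioc, add_tsub_cancel_left,
    add_tsub_cancel_right]

lemma filter_Vnkb_lt_fmin (hk : 1 ≤ k) (hb : b ≤ n) :
    {X ∈ Vnkb n k b | n - b < fmin X} = powersetCard k (Ioc (n - b) n) := by
  ext X
  rw [mem_filter, mem_Vnkb, mem_powersetCard, ← Icc_add_one_left_eq_Ioc]
  constructor
  · rintro ⟨⟨hsub, hcard, -⟩, hlt⟩
    have hX : X.Nonempty := card_pos.1 (hcard ▸ hk)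
    have hfmax : fmax X < n + 1 := mem_range.1 (hsub (fmax_mem hX))
    exact ⟨(subset_Icc_iff_le_fmin_and_fmax_le hX).2 ⟨hlt, by omega⟩, hcard⟩
  · rintro ⟨hsub, hcard⟩
    have hX : X.Nonempty := card_pos.1 (hcard ▸ hk)
    obtain ⟨hlt, hle⟩ := (subset_Icc_iff_le_fmin_and_fmax_le hX).1 hsub
    refine ⟨⟨hsub.trans fun x hx => ?_, hcard, by omega⟩, hlt⟩
    rw [mem_Icc] at hx
    rw [mem_range]
    omega

lemma card_Vnkb_eq_sum_add_card :
    #(Vnkb n k b) = ∑ m ∈ range (n - b + 1), #{X ∈ Vnkb n k b | fmin X = m}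
      + #{X ∈ Vnkb n k b | n - b < fmin X} := by
  rw [← card_filter_add_card_filter_not (fun X => fmin X ≤ n - b),
    card_eq_sum_card_fiberwise fun X hX => mem_range.2 (Nat.lt_succ_of_le (mem_filter.1 hX).2)]
  simp only [filter_filter, not_le]
  congr 1
  refine sum_congr rfl fun m hm => congrArg card <| filter_congr fun X _ => ?_
  rw [mem_range] at hm
  exact and_iff_right_of_imp fun h => by omega

lemma card_Vnkb_of_le (hk : 1 ≤ k) (hb : b ≤ n) :
    #(Vnkb n k b) = (n - b + 1) * b.choose (k - 1) + b.choose k := by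
  rw [card_Vnkb_eq_sum_add_card, filter_Vnkb_lt_fmin hk hb, card_powersetCard, Nat.card_Ioc,
    Nat.sub_sub_self hb, sum_congr rfl fun m hm => card_filter_Vnkb_fmin_eq hk ?_, sum_const,
    card_range, smul_eq_mul]
  rw [mem_range] at hm
  omega

end Vnkb

lemma Nat.mul_choose_succ_succ_add_choose_succ (b j : ℕ) :
    j * (b + 1).choose (j + 1) + b.choose (j + 1) = b * b.choose j := by
  have absorption := Nat.add_one_mul_choose_eq b j
  rw [Nat.choose_succ_succ] at absorption ⊢
  linarith

theorem card_Vnkb_general (n k b : ℕ) (h1 : 1 ≤ k - 1) (h3 : b ≤ n) :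
    (Vnkb n k b).card = (n - b + 1) * Nat.choose b (k - 1) + Nat.choose b k ∧
    ((Vnkb n k b).card : ℤ) =
      ((n : ℤ) + 1) * Nat.choose b (k - 1) - ((k : ℤ) - 1) * Nat.choose (b + 1) k := by
  have hcard := card_Vnkb_of_le (by omega : 1 ≤ k) h3
  refine ⟨hcard, ?_⟩
  obtain ⟨j, rfl⟩ : ∃ j, k = j + 1 := ⟨k - 1, by omega⟩
  have hchoose : (j * (b + 1).choose (j + 1) + b.choose (j + 1) : ℤ) = b * b.choose j := by
    exact_mod_cast Nat.mul_choose_succ_succ_add_choose_succ b j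
  rw [hcard]
  push_cast [Nat.cast_sub h3, add_tsub_cancel_right]
  linear_combination hchoose

/-- The number of vertices of `G_{n,k,b}`:
`|V_{n,k,b}| = (n-b+1)·C(b,k-1) + C(b,k) = (n+1)·C(b,k-1) - (k-1)·C(b+1,k)`. -/
theorem card_Vnkb (n k b : ℕ) (h1 : 1 ≤ k - 1) (h2 : k - 1 ≤ b) (h3 : b ≤ n) :
    (Vnkb n k b).card = (n - b + 1) * Nat.choose b (k - 1) + Nat.choose b k ∧
    ((Vnkb n k b).card : ℤ) =
      ((n : ℤ) + 1) * Nat.choose b (k - 1) - ((k : ℤ) - 1) * Nat.choose (b + 1) k :=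
  card_Vnkb_general n k b h1 h3
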